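/- For classical modal logic K over finitely branching crisp frames, a formula φ over {0,∧,∨,→,□,◇} is K-valid if and only if the G²± formula 1 ⊰ φ^∂ is v₂-valid over finitely branching frames (i.e., v₂(1 ⊰ φ^∂, w) = 0 in every model and state). -/

import Mathlib

open unitInterval

instance : Fact ((0:ℝ) ≤ 1) := ⟨zero_le_one⟩

/-- Gödel implication on [0,1]. -/
noncomputable def gimp (a b : I) : I := if a ≤ b then 1 else b

/-- Gödel coimplication on [0,1]. -/
noncomputable def gcoimp (a b : I) : I := if a ≤ b then 0 else a

/-- The language of G²± with ¬, ∧, →, ■, ◆. -/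
inductive Fm : Type
  | var : ℕ → Fm
  | neg : Fm → Fm
  | and : Fm → Fm → Fm
  | imp : Fm → Fm → Fm
  | box : Fm → Fm
  | dia : Fm → Fm

/-- A bi-relational G²± model. -/
structure Mdl where
  W : Type
  Rp : W → W → I
  Rm : W → W → I
  v1 : ℕ → W → I
  v2 : ℕ → W → I

/-- The pair (positive support, negative support) of a formula at a state. -/
noncomputable def Mdl.val (M : Mdl) : Fm → M.W → I × I
  | .var n, w => (M.v1 n w, M.v2 n w)
  | .neg φ, w => ((M.val φ w).2, (M.val φ w).1)
  | .and φ ψ, w => ((M.val φ w).1 ⊓ (M.val ψ w).1, (M.val φ w).2 ⊔ (M.val ψ w).2)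
  | .imp φ ψ, w => (gimp (M.val φ w).1 (M.val ψ w).1, gcoimp (M.val ψ w).2 (M.val φ w).2)
  | .box φ, w => (⨅ w', gimp (M.Rp w w') (M.val φ w').1, ⨅ w', gimp (M.Rm w w') (M.val φ w').2)
  | .dia φ, w => (⨆ w', (M.Rp w w') ⊓ (M.val φ w').1, ⨆ w', (M.Rm w w') ⊓ (M.val φ w').2)

noncomputable def Mdl.val1 (M : Mdl) (φ : Fm) (w : M.W) : I := (M.val φ w).1
noncomputable def Mdl.val2 (M : Mdl) (φ : Fm) (w : M.W) : I := (M.val φ w).2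

/-- Classical modal formulas over {0, ∧, ∨, →, □, ◇}. -/
inductive CFm : Type
  | bot : CFm
  | var : ℕ → CFm
  | and : CFm → CFm → CFm
  | or : CFm → CFm → CFm
  | imp : CFm → CFm → CFm
  | box : CFm → CFm
  | dia : CFm → CFm

/-- Classical Kripke semantics. -/
def csat {W : Type} (R : W → W → Prop) (V : ℕ → W → Prop) : CFm → W → Prop
  | .bot, _ => False
  | .var n, w => V n w
  | .and φ ψ, w => csat R V φ w ∧ csat R V ψ w
  | .or φ ψ, w => csat R V φ w ∨ csat R V ψ w
  | .imp φ ψ, w => csat R V φ w → csat R V ψ w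
  | .box φ, w => ∀ w', R w w' → csat R V φ w'
  | .dia φ, w => ∃ w', R w w' ∧ csat R V φ w'

/-- A G²± formula with constant value (1,0): the constant 1. -/
def fmTop : Fm := .imp (.var 0) (.var 0)

/-- Coimplication in the G²± language: φ ⊰ ψ := ¬(¬ψ → ¬φ). -/
def fmCoimp (φ ψ : Fm) : Fm := .neg (.imp (.neg ψ) (.neg φ))

/-- Disjunction in the G²± language: φ ∨ ψ := ¬(¬φ ∧ ¬ψ). -/
def fmOr (φ ψ : Fm) : Fm := .neg (.and (.neg φ) (.neg ψ))

/-- The dual translation φ^∂. -/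
def CFm.dual : CFm → Fm
  | .bot => fmTop
  | .var n => fmCoimp fmTop (fmCoimp fmTop (.var n))
  | .and φ ψ => fmOr φ.dual ψ.dual
  | .or φ ψ => .and φ.dual ψ.dual
  | .imp φ ψ => fmCoimp ψ.dual φ.dual
  | .box φ => .box φ.dual
  | .dia φ => .dia φ.dual

/-!
Only whether a value is `0` matters. The negative support `v₂(φ^∂, w)` is nonzero
exactly when `φ` holds classically at `w` in the crisp frame `R w w' :↔ R⁻(w, w') ≠ 0` with
valuation `p ↦ v₂(p) ≠ 0`: on the values `v₂` computes, Gödel implication `a ⇒ b` is nonzero iff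
`a ≠ 0 → b ≠ 0`, so each clause of the dual translation becomes the matching classical clause.
The box clause needs finite branching, since an infinite infimum of positive values can be `0`.
Finally `v₂(1 ⊰ ψ) = (v₂ ψ ⇒ 0)` vanishes iff `v₂ ψ ≠ 0`, and every crisp Kripke model arises as
such a reduct of a `{0,1}`-valued G²± model.
-/

section CompleteLinearOrder

variable {α ι : Type*} [CompleteLinearOrder α] {f : ι → α}

theorem exists_eq_iInf_of_finite_ne_top [Nonempty ι] (hf : {i | f i ≠ ⊤}.Finite) :
    ∃ i, f i = ⨅ j, f j := by
  rcases Set.eq_empty_or_nonempty {i | f i ≠ ⊤} with hempty | hne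
  · have hall : ∀ i, f i = ⊤ := fun i => by
      simpa using Set.eq_empty_iff_forall_notMem.mp hempty i
    exact ⟨Classical.arbitrary ι, by rw [hall, iInf_eq_top.mpr hall]⟩
  · obtain ⟨i, -, hmin⟩ := Set.exists_min_image _ f hf hne
    refine ⟨i, le_antisymm (le_iInf fun j => ?_) (iInf_le f i)⟩
    by_cases hj : f j = ⊤
    · exact hj ▸ le_top
    · exact hmin j hj

theorem iInf_eq_bot_iff_of_finite_ne_top [Nonempty ι] (hf : {i | f i ≠ ⊤}.Finite) :
    ⨅ i, f i = ⊥ ↔ ∃ i, f i = ⊥ := by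
  refine ⟨fun h => ?_, fun ⟨i, hi⟩ => le_bot_iff.mp (hi ▸ iInf_le f i)⟩
  obtain ⟨i, hi⟩ := exists_eq_iInf_of_finite_ne_top hf
  exact ⟨i, hi.trans h⟩

end CompleteLinearOrder

namespace unitInterval

theorem bot_eq_zero : (⊥ : I) = 0 := rfl

end unitInterval

theorem gimp_zero_left (b : I) : gimp 0 b = 1 :=
  if_pos unitInterval.nonneg'

theorem gimp_ne_zero_iff {a b : I} : gimp a b ≠ 0 ↔ (a ≠ 0 → b ≠ 0) := by
  unfold gimp
  split_ifs with hab
  · exact ⟨fun _ ha hb => ha (le_bot_iff.mp (hab.trans_eq hb)), fun _ => one_ne_zero⟩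
  · have ha : a ≠ 0 := fun ha => hab (ha ▸ unitInterval.nonneg')
    tauto

theorem gimp_zero_right_eq_zero_iff {a : I} : gimp a 0 = 0 ↔ a ≠ 0 := by
  rw [← not_iff_not, ← ne_eq, gimp_ne_zero_iff]
  simp

namespace Mdl

variable (M : Mdl)

section Val2

variable (φ ψ : Fm) (w : M.W)

@[simp] theorem val2_var (n : ℕ) : M.val2 (.var n) w = M.v2 n w := rfl

@[simp] theorem val2_and : M.val2 (.and φ ψ) w = M.val2 φ w ⊔ M.val2 ψ w := rfl

@[simp] theorem val2_box : M.val2 (.box φ) w = ⨅ w', gimp (M.Rm w w') (M.val2 φ w') := rfl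

@[simp] theorem val2_dia : M.val2 (.dia φ) w = ⨆ w', M.Rm w w' ⊓ M.val2 φ w' := rfl

@[simp] theorem val2_fmTop : M.val2 fmTop w = 0 := by
  simp [val2, fmTop, val, gcoimp]

@[simp] theorem val2_fmCoimp : M.val2 (fmCoimp φ ψ) w = gimp (M.val2 ψ w) (M.val2 φ w) := rfl

@[simp] theorem val2_fmOr : M.val2 (fmOr φ ψ) w = M.val2 φ w ⊓ M.val2 ψ w := rfl

theorem val2_fmCoimp_fmTop_eq_zero_iff : M.val2 (fmCoimp fmTop φ) w = 0 ↔ M.val2 φ w ≠ 0 := by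
  rw [val2_fmCoimp, val2_fmTop, gimp_zero_right_eq_zero_iff]

end Val2

def negSuppRel (a b : M.W) : Prop := M.Rm a b ≠ 0

def negSuppVal (n : ℕ) (a : M.W) : Prop := M.v2 n a ≠ 0

theorem val2_box_ne_zero_iff (hM : ∀ w, {w' | M.negSuppRel w w'}.Finite) (φ : Fm) (w : M.W) :
    M.val2 (.box φ) w ≠ 0 ↔ ∀ w', M.negSuppRel w w' → M.val2 φ w' ≠ 0 := by
  have : Nonempty M.W := ⟨w⟩
  have hfin : {w' | gimp (M.Rm w w') (M.val2 φ w') ≠ ⊤}.Finite :=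
    (hM w).subset fun w' hw' hRm => hw' (by rw [hRm, gimp_zero_left]; rfl)
  rw [val2_box, ← unitInterval.bot_eq_zero, ne_eq, iInf_eq_bot_iff_of_finite_ne_top hfin]
  simp only [unitInterval.bot_eq_zero, not_exists, ← ne_eq, gimp_ne_zero_iff, negSuppRel]

theorem val2_dual_ne_zero_iff (hM : ∀ w, {w' | M.negSuppRel w w'}.Finite) (φ : CFm) (w : M.W) :
    M.val2 φ.dual w ≠ 0 ↔ csat M.negSuppRel M.negSuppVal φ w := by
  induction φ generalizing w with
  | bot => simp [CFm.dual, csat]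
  | var n => simp [CFm.dual, csat, negSuppVal, gimp_ne_zero_iff]
  | and φ ψ ihφ ihψ =>
    simp only [CFm.dual, csat, val2_fmOr, ← ihφ, ← ihψ, ← unitInterval.bot_eq_zero, ne_eq,
      min_eq_bot]
    tauto
  | or φ ψ ihφ ihψ =>
    simp only [CFm.dual, csat, val2_and, ← ihφ, ← ihψ, ← unitInterval.bot_eq_zero, ne_eq,
      sup_eq_bot_iff]
    tauto
  | imp φ ψ ihφ ihψ => simp only [CFm.dual, csat, val2_fmCoimp, ← ihφ, ← ihψ, gimp_ne_zero_iff]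
  | box φ ih => simp only [CFm.dual, csat, val2_box_ne_zero_iff M hM, ih]
  | dia φ ih =>
    simp only [CFm.dual, csat, val2_dia, ← ih, ← unitInterval.bot_eq_zero, ne_eq, iSup_eq_bot,
      min_eq_bot, negSuppRel, not_forall, not_or]

open Classical in
noncomputable def ofKripke {W : Type} (R : W → W → Prop) (V : ℕ → W → Prop) : Mdl where
  W := W
  Rp a b := if R a b then 1 else 0
  Rm a b := if R a b then 1 else 0
  v1 n a := if V n a then 1 else 0
  v2 n a := if V n a then 1 else 0

variable {W : Type} (R : W → W → Prop) (V : ℕ → W → Prop)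

@[simp] theorem negSuppRel_ofKripke : (ofKripke R V).negSuppRel = R := by
  ext a b
  simp [negSuppRel, ofKripke]

@[simp] theorem negSuppVal_ofKripke : (ofKripke R V).negSuppVal = V := by
  ext n a
  simp [negSuppVal, ofKripke]

end Mdl

theorem K_validity_iff_v2_validity_of_dual :
    ∀ φ : CFm,
      (∀ (W : Type) (R : W → W → Prop) (V : ℕ → W → Prop),
        (∀ w : W, {w' | R w w'}.Finite) → ∀ w : W, csat R V φ w) ↔
      (∀ M : Mdl,
        (∀ w : M.W, {w' | M.Rp w w' ≠ 0}.Finite) →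
        (∀ w : M.W, {w' | M.Rm w w' ≠ 0}.Finite) →
        ∀ w : M.W, M.val2 (fmCoimp fmTop φ.dual) w = 0) := by
  intro φ
  simp only [Mdl.val2_fmCoimp_fmTop_eq_zero_iff]
  constructor
  · intro hK M _ hM w
    exact (M.val2_dual_ne_zero_iff hM φ w).mpr (hK _ _ _ hM w)
  · intro hv W R V hR w
    have hfin : ∀ w, {w' | (Mdl.ofKripke R V).negSuppRel w w'}.Finite := by
      rw [Mdl.negSuppRel_ofKripke]; exact hR
    have hφ := ((Mdl.ofKripke R V).val2_dual_ne_zero_iff hfin φ w).mp (hv _ hfin hfin w)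
    rwa [Mdl.negSuppRel_ofKripke, Mdl.negSuppVal_ofKripke] at hφ
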